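/- arXiv:2401.00189 — 2 statements merged into one kernel-verified Lean document; each statement's English description precedes it below -/
import Mathlib

section
/- Let A_min be the order-3 dimension-2 tensor with entries a'₁₁₁ = −1, a'₁₂₁ = a'₁₁₂ = 0, a'₁₂₂ = −1, a'₂₁₁ = a'₂₁₂ = a'₂₂₁ = 0, a'₂₂₂ = −1, and q_min = (1,0)ᵀ. Then SOL(q_min, A_min) = {(0,0)ᵀ, (1,0)ᵀ}. -/
def tmul {n k : ℕ} (a : Fin n → (Fin k → Fin n) → ℝ) (x : Fin n → ℝ) (i : Fin n) : ℝ :=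
  ∑ j : Fin k → Fin n, a i j * ∏ t : Fin k, x (j t)

def SOL {n k : ℕ} (q : Fin n → ℝ) (a : Fin n → (Fin k → Fin n) → ℝ) : Set (Fin n → ℝ) :=
  {x | (∀ i, 0 ≤ x i) ∧ (∀ i, 0 ≤ tmul a x i + q i) ∧ ∑ i, x i * (tmul a x i + q i) = 0}

/-- `A_min` with entries `a'₁₁₁ = -1`, `a'₁₂₁ = a'₁₁₂ = 0`, `a'₁₂₂ = -1`,
`a'₂₁₁ = a'₂₁₂ = a'₂₂₁ = 0`, `a'₂₂₂ = -1`. -/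
def Amin : Fin 2 → (Fin 2 → Fin 2) → ℝ := fun i j =>
  if i = 0 then
    (if (j 0 = 0 ∧ j 1 = 0) ∨ (j 0 = 1 ∧ j 1 = 1) then -1 else 0)
  else
    (if j 0 = 1 ∧ j 1 = 1 then -1 else 0)

lemma tmul0 (x : Fin 2 → ℝ) : tmul Amin x 0 = -(x 0 * x 0) - x 1 * x 1 := by
  rw [tmul, ← Equiv.sum_comp ((piFinTwoEquiv fun _ => Fin 2).symm)
    (fun j => Amin 0 j * ∏ t, x (j t))]
  simp [Fintype.sum_prod_type, Fin.sum_univ_two, Fin.prod_univ_two, Amin, piFinTwoEquiv]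
  ring

lemma tmul1 (x : Fin 2 → ℝ) : tmul Amin x 1 = -(x 1 * x 1) := by
  rw [tmul, ← Equiv.sum_comp ((piFinTwoEquiv fun _ => Fin 2).symm)
    (fun j => Amin 1 j * ∏ t, x (j t))]
  simp [Fintype.sum_prod_type, Fin.sum_univ_two, Fin.prod_univ_two, Amin, piFinTwoEquiv]

/-- `SOL(q_min, A_min) = {(0,0)ᵀ, (1,0)ᵀ}` for `q_min = (1,0)ᵀ`. -/
theorem sol_min_example : SOL ![1, 0] Amin = {![0, 0], ![1, 0]} := by
  ext x
  simp only [SOL, Set.mem_setOf_eq, Set.mem_insert_iff, Set.mem_singleton_iff]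
  constructor
  · rintro ⟨hpos, hfeas, hsum⟩
    have h0 := hpos 0
    have h1 := hpos 1
    have f0 := hfeas 0
    have f1 := hfeas 1
    rw [tmul0] at f0
    rw [tmul1] at f1
    rw [Fin.sum_univ_two, tmul0, tmul1] at hsum
    simp only [Matrix.cons_val_zero, Matrix.cons_val_one, Matrix.head_cons] at f0 f1 hsum
    have hx1 : x 1 = 0 := le_antisymm (by nlinarith) h1
    have hx0 : x 0 = 0 ∨ x 0 = 1 := by
      have h : x 0 * (1 - x 0) * (1 + x 0) = 0 := by nlinarith
      rcases mul_eq_zero.1 h with h | h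
      · rcases mul_eq_zero.1 h with h | h
        · exact Or.inl h
        · exact Or.inr (by linarith)
      · exfalso; linarith
    rcases hx0 with h | h
    · left; funext i; fin_cases i <;> simp [h, hx1]
    · right; funext i; fin_cases i <;> simp [h, hx1]
  · rintro (rfl | rfl) <;>
      refine ⟨fun i => by fin_cases i <;> norm_num,
        fun i => by fin_cases i <;> simp [tmul0, tmul1], ?_⟩ <;>
      · rw [Fin.sum_univ_two, tmul0, tmul1]; norm_num
end

section
/- If A(ω) is a semi-infinite S-tensor relative to Ω (i.e., there exists x > 0 with A(ω)x^{m-1} > 0 for all ω ∈ Ω), Ω is compact, the entries of A(ω) are continuous in ω, and q : Ω → ℝⁿ is continuous, then the semi-infinite tensor complementarity problem is feasible: there exists y ≥ 0 such that A(ω)y^{m-1} + q(ω) ≥ 0 for all ω ∈ Ω. Specifically, one may take y = ᾱx where ᾱ = (α/λ)^{1/(m-1)} for suitable λ, α > 0. -/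
lemma tmul_smul {n k : ℕ} (a : Fin n → (Fin k → Fin n) → ℝ) (x : Fin n → ℝ) (c : ℝ)
    (i : Fin n) : tmul a (fun t => c * x t) i = c ^ k * tmul a x i := by
  unfold tmul
  rw [Finset.mul_sum]
  refine Finset.sum_congr rfl fun j _ => ?_
  rw [Finset.prod_mul_distrib, Finset.prod_const]
  simp [Finset.card_univ]
  ring

/-- If `A(ω)` is a semi-infinite S-tensor relative to a compact `Ω` on which the entries of
`A(ω)` and `q(ω)` are continuous, then SITCP(q(ω), A(ω), Ω) is feasible. -/
theorem sitcp_feasible_of_semiInfinite_S_tensor {n k p : ℕ} (hk : 1 ≤ k)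
    (Ω : Set (Fin p → ℝ)) (hΩ : IsCompact Ω)
    (A : (Fin p → ℝ) → Fin n → (Fin k → Fin n) → ℝ) (q : (Fin p → ℝ) → Fin n → ℝ)
    (hA : ∀ i j, ContinuousOn (fun ω => A ω i j) Ω)
    (hq : ∀ i, ContinuousOn (fun ω => q ω i) Ω)
    (hS : ∃ x : Fin n → ℝ, (∀ i, 0 < x i) ∧ ∀ ω ∈ Ω, ∀ i, 0 < tmul (A ω) x i) :
    ∃ y : Fin n → ℝ, (∀ i, 0 ≤ y i) ∧ ∀ ω ∈ Ω, ∀ i, 0 ≤ tmul (A ω) y i + q ω i := by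
  rcases Ω.eq_empty_or_nonempty with hE | hne
  · exact ⟨fun _ => 0, fun i => le_refl 0, by simp [hE]⟩
  obtain ⟨x, hxpos, hx⟩ := hS
  have hcont : ∀ i : Fin n, ContinuousOn (fun ω => tmul (A ω) x i) Ω := by
    intro i
    unfold tmul
    exact continuousOn_finset_sum _ fun j _ => (hA i j).mul continuousOn_const
  have hmin : ∀ i : Fin n, ∃ l : ℝ, 0 < l ∧ ∀ ω ∈ Ω, l ≤ tmul (A ω) x i := by
    intro i
    obtain ⟨ω₀, hω₀, hmin⟩ := hΩ.exists_isMinOn hne (hcont i)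
    exact ⟨_, hx ω₀ hω₀ i, fun ω hω => hmin hω⟩
  have hqmin : ∀ i : Fin n, ∃ m : ℝ, ∀ ω ∈ Ω, m ≤ q ω i := by
    intro i
    obtain ⟨ω₀, hω₀, hmin⟩ := hΩ.exists_isMinOn hne (hq i)
    exact ⟨_, fun ω hω => hmin hω⟩
  choose lam hlampos hlam using hmin
  choose m hm using hqmin
  set c : ℝ := 1 + ∑ i : Fin n, max 0 (-(m i) / lam i) with hc
  have hc1 : (1 : ℝ) ≤ c := by
    have h : 0 ≤ ∑ i : Fin n, max 0 (-(m i) / lam i) :=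
      Finset.sum_nonneg fun i _ => le_max_left _ _
    rw [hc]; linarith
  have hci : ∀ i : Fin n, -(m i) / lam i ≤ c := by
    intro i
    have h1 : -(m i) / lam i ≤ max 0 (-(m i) / lam i) := le_max_right _ _
    have h2 : max 0 (-(m i) / lam i) ≤ ∑ j : Fin n, max 0 (-(m j) / lam j) :=
      Finset.single_le_sum (f := fun j => max 0 (-(m j) / lam j))
        (fun j _ => le_max_left _ _) (Finset.mem_univ i)
    rw [hc]; linarith
  have hck : c ≤ c ^ k := le_self_pow₀ (by linarith) (by omega)
  refine ⟨fun t => c * x t, fun i => mul_nonneg (by linarith) (hxpos i).le, fun ω hω i => ?_⟩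
  rw [tmul_smul]
  have h1 : -(m i) ≤ c * lam i := by
    have := (div_le_iff₀ (hlampos i)).mp (hci i)
    linarith
  have h2 : c * lam i ≤ c ^ k * lam i :=
    mul_le_mul_of_nonneg_right hck (hlampos i).le
  have h3 : c ^ k * lam i ≤ c ^ k * tmul (A ω) x i :=
    mul_le_mul_of_nonneg_left (hlam i ω hω) (by positivity)
  have := hm i ω hω
  linarith
end
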